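/- Let N be a positive even integer and P a positive integer. For i = 1,…,P let h̃_i be a complex number and let k_i, l_i be integers. Let Φ be the N×N discrete Fresnel transform matrix with entries Φ_{m,n} = (1/√N)·exp(−i·π/4)·exp(i·π·(m−n)²/N), Δ the N×N diagonal matrix with Δ_{n,n} = exp(i·2π·n/N), and Π the N×N cyclic-shift permutation matrix with Π_{m,n} = 1 if m ≡ n+1 (mod N) and 0 otherwise. Let H = Σ_{i=1}^{P} h̃_i·Δ^{k_i}·Π^{l_i} be the time-domain channel matrix. Then the Fresnel-domain channel matrix satisfies Φ·H·Φ^H = Σ_{i=1}^{P} h̃_i·exp(−i·π·k_i²/N)·Δ^{k_i}·Π^{l_i+k_i}. -/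

import Mathlib

/-!
For even `N` the chirp `t ↦ exp(iπt²/N)` is `N`-periodic on `ℤ`, so `Φ_{m,a}` depends only on
`m - a` mod `N`. Entry `(m, n)` of `Φ Δ^k Π^l Φᴴ` is then a sum over `b` of
`chirp(m - b - l) · ω^{k(b + l)} · conj (chirp(n - b))`, in which the terms quadratic in `b`
cancel: what is left is `1/N` times a geometric sum of `N`-th roots of unity. It vanishes unless
`m ≡ n + l + k (mod N)`, and then the remaining phase is `exp(-iπk²/N) · ω^{km}`.
-/

open Matrix Complex Real

/-- The N×N discrete Fresnel transform (DFnT) matrix with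
Φ_{m,n} = (1/√N)·exp(−i·π/4)·exp(i·π·(m−n)²/N). -/
noncomputable def PhiMat (N : ℕ) : Matrix (Fin N) (Fin N) ℂ :=
  Matrix.of fun m n =>
    (1 / Real.sqrt N : ℂ) * Complex.exp (-(Real.pi / 4) * Complex.I) *
      Complex.exp (Real.pi * Complex.I * (((m : ℕ) : ℤ) - ((n : ℕ) : ℤ)) ^ 2 / N)

/-- The N×N diagonal "Doppler-shift" matrix Δ with Δ_{n,n} = exp(i·2π·n/N). -/
noncomputable def DeltaMat (N : ℕ) : Matrix (Fin N) (Fin N) ℂ :=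
  Matrix.diagonal fun n => Complex.exp (2 * Real.pi * Complex.I * (n : ℕ) / N)

/-- The N×N cyclic-shift permutation matrix Π with Π_{m,n} = 1 if m ≡ n+1 (mod N). -/
def PiMat (N : ℕ) : Matrix (Fin N) (Fin N) ℂ :=
  Matrix.of fun m n => if (m : ℕ) = ((n : ℕ) + 1) % N then 1 else 0

theorem Int.sq_modEq_sq_of_modEq {n a b : ℤ} (hn : Even n) (h : a ≡ b [ZMOD n]) :
    a ^ 2 ≡ b ^ 2 [ZMOD 2 * n] := by
  obtain ⟨s, rfl⟩ := hn
  obtain ⟨t, ht⟩ := (Int.modEq_iff_dvd.mp h)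
  refine Int.modEq_iff_dvd.mpr ⟨a * t + s * t ^ 2, ?_⟩
  rw [show b = a + (s + s) * t by linarith]
  ring

theorem Matrix.zpow_eq_of_map_add {n R : Type*} [Fintype n] [DecidableEq n] [CommRing R]
    (f : ℤ → Matrix n n R) (h0 : f 0 = 1) (hadd : ∀ a b, f (a + b) = f a * f b) (k : ℤ) :
    f 1 ^ k = f k := by
  have hnat : ∀ m : ℕ, f 1 ^ m = f m := by
    intro m
    induction m with
    | zero => simpa using h0.symm
    | succ m ih => rw [pow_succ, ih, ← hadd]; push_cast; rfl
  obtain ⟨m, rfl | rfl⟩ := Int.eq_nat_or_neg k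
  · exact_mod_cast hnat m
  · rw [zpow_neg_natCast, hnat]
    exact Matrix.inv_eq_left_inv (by rw [← hadd, neg_add_cancel, h0])

theorem Fin.sum_ite_intCast_modEq {α : Type*} [AddCommMonoid α] {N : ℕ} (hN : 0 < N) (t : ℤ)
    (f : ℤ → α) (hf : ∀ a, a ≡ t [ZMOD N] → f a = f t) :
    ∑ a : Fin N, (if (a : ℤ) ≡ t [ZMOD N] then f a else 0) = f t := by
  have hmod : 0 ≤ t % N ∧ t % N < N :=
    ⟨Int.emod_nonneg t (by omega), Int.emod_lt_of_pos t (by omega)⟩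
  let a₀ : Fin N := ⟨(t % N).toNat, by omega⟩
  have ha₀ : (a₀ : ℤ) = t % N := Int.toNat_of_nonneg hmod.1
  have ha₀t : (a₀ : ℤ) ≡ t [ZMOD N] := ha₀ ▸ Int.mod_modEq t N
  rw [Finset.sum_eq_single a₀, if_pos ha₀t, hf _ ha₀t]
  · intro a _ ha
    refine if_neg fun hat => ha (Fin.ext ?_)
    exact (Int.natCast_modEq_iff.mp (hat.trans ha₀t.symm)).eq_of_lt_of_lt a.isLt a₀.isLt
  · simp

open ComplexConjugate

/-- The chirp is `t ↦ expPiDiv N (t ^ 2)`, the Doppler phase `ω ^ t` is `expPiDiv N (2 * t)`. -/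
noncomputable def expPiDiv (N : ℕ) (t : ℤ) : ℂ := exp (π * I * t / N)

theorem expPiDiv_add (N : ℕ) (a b : ℤ) : expPiDiv N (a + b) = expPiDiv N a * expPiDiv N b := by
  rw [expPiDiv, expPiDiv, expPiDiv, ← Complex.exp_add]
  push_cast
  ring_nf

theorem conj_expPiDiv (N : ℕ) (t : ℤ) : conj (expPiDiv N t) = expPiDiv N (-t) := by
  rw [expPiDiv, expPiDiv, ← Complex.exp_conj]
  simp

theorem expPiDiv_two_mul_mul (N : ℕ) (t : ℤ) : expPiDiv N (2 * N * t) = 1 := by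
  rcases eq_or_ne N 0 with rfl | hN
  · simp [expPiDiv]
  · rw [expPiDiv, ← Complex.exp_int_mul_two_pi_mul_I t]
    congr 1
    push_cast
    field_simp

theorem expPiDiv_congr {N : ℕ} {a b : ℤ} (h : a ≡ b [ZMOD 2 * N]) :
    expPiDiv N a = expPiDiv N b := by
  obtain ⟨t, ht⟩ := Int.modEq_iff_dvd.mp h
  rw [show b = a + 2 * N * t by linarith, expPiDiv_add, expPiDiv_two_mul_mul, mul_one]

theorem sum_expPiDiv_two_mul_mul {N : ℕ} (hN : 0 < N) (j : ℤ) :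
    ∑ b : Fin N, expPiDiv N (2 * j * b) = if (N : ℤ) ∣ j then (N : ℂ) else 0 := by
  have hζ := Complex.isPrimitiveRoot_exp N hN.ne'
  set z := exp (2 * π * I / N) ^ j with hz
  have hterm : ∀ b : ℕ, expPiDiv N (2 * j * b) = z ^ b := by
    intro b
    rw [hz, ← Complex.exp_int_mul, ← Complex.exp_nat_mul, expPiDiv]
    push_cast
    ring_nf
  simp only [hterm]
  rw [Fin.sum_univ_eq_sum_range (z ^ ·)]
  split_ifs with hdvd
  · have hz_eq : z = 1 := (hζ.zpow_eq_one_iff_dvd j).mpr hdvd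
    simp [hz_eq]
  · have hz_ne : z ≠ 1 := fun h => hdvd ((hζ.zpow_eq_one_iff_dvd j).mp h)
    have hzN : z ^ N = 1 := by
      rw [hz, ← zpow_natCast, ← _root_.zpow_mul, mul_comm j, _root_.zpow_mul, zpow_natCast,
        hζ.pow_eq_one, _root_.one_zpow]
    rw [geom_sum_eq hz_ne, hzN, sub_self, zero_div]

theorem DeltaMat_zpow (N : ℕ) (k : ℤ) :
    DeltaMat N ^ k = diagonal fun n : Fin N => expPiDiv N (2 * k * n) := by
  have hDelta : DeltaMat N = diagonal fun n : Fin N => expPiDiv N (2 * (1 : ℤ) * n) := by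
    simp only [DeltaMat, expPiDiv]
    congr! 3
    push_cast
    ring
  rw [hDelta]
  refine Matrix.zpow_eq_of_map_add
    (fun k : ℤ => diagonal fun n : Fin N => expPiDiv N (2 * k * n)) (by simp [expPiDiv])
    (fun a b => ?_) k
  rw [diagonal_mul_diagonal]
  simp only [← expPiDiv_add, mul_add, add_mul]

def cyclicShift (N : ℕ) (l : ℤ) : Matrix (Fin N) (Fin N) ℂ :=
  of fun a b => if (a : ℤ) ≡ b + l [ZMOD N] then 1 else 0

theorem cyclicShift_zero (N : ℕ) : cyclicShift N 0 = 1 := by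
  ext a b
  simp only [cyclicShift, of_apply, add_zero, one_apply, Int.natCast_modEq_iff]
  congr 1
  exact propext ⟨fun h => Fin.ext (h.eq_of_lt_of_lt a.isLt b.isLt), fun h => h ▸ rfl⟩

theorem cyclicShift_one (N : ℕ) : cyclicShift N 1 = PiMat N := by
  ext a b
  simp only [cyclicShift, PiMat, of_apply]
  congr 1
  rw [show (b : ℤ) + 1 = ((b + 1 : ℕ) : ℤ) by push_cast; rfl, Int.natCast_modEq_iff,
    Nat.ModEq, Nat.mod_eq_of_lt a.isLt]

theorem cyclicShift_add {N : ℕ} (hN : 0 < N) (l l' : ℤ) :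
    cyclicShift N (l + l') = cyclicShift N l * cyclicShift N l' := by
  ext a b
  simp only [cyclicShift, mul_apply, of_apply, mul_ite, mul_one, mul_zero]
  rw [Fin.sum_ite_intCast_modEq hN _ (fun c => if (a : ℤ) ≡ c + l [ZMOD N] then 1 else 0)]
  · rw [add_comm l, add_assoc]
  · intro c hc
    exact if_congr ⟨fun h => h.trans (hc.add_right l), fun h => h.trans (hc.add_right l).symm⟩
      rfl rfl

theorem PiMat_zpow {N : ℕ} (hN : 0 < N) (l : ℤ) : PiMat N ^ l = cyclicShift N l := by
  rw [← cyclicShift_one]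
  exact Matrix.zpow_eq_of_map_add _ (cyclicShift_zero N) (cyclicShift_add hN) l

theorem DeltaMat_zpow_mul_PiMat_zpow_apply {N : ℕ} (hN : 0 < N) (k l : ℤ) (a b : Fin N) :
    (DeltaMat N ^ k * PiMat N ^ l) a b =
      if (a : ℤ) ≡ b + l [ZMOD N] then expPiDiv N (2 * k * a) else 0 := by
  rw [DeltaMat_zpow, PiMat_zpow hN, diagonal_mul]
  simp [cyclicShift]

noncomputable def fresnelKernel (N : ℕ) (t : ℤ) : ℂ :=
  (1 / Real.sqrt N : ℂ) * exp (-(π / 4) * I) * expPiDiv N (t ^ 2)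

theorem PhiMat_apply (N : ℕ) (m n : Fin N) : PhiMat N m n = fresnelKernel N (m - n) := by
  simp only [PhiMat, fresnelKernel, expPiDiv, of_apply]
  push_cast
  ring_nf

theorem fresnelKernel_congr {N : ℕ} (hN : Even N) {t u : ℤ} (h : t ≡ u [ZMOD N]) :
    fresnelKernel N t = fresnelKernel N u := by
  rw [fresnelKernel, fresnelKernel,
    expPiDiv_congr (Int.sq_modEq_sq_of_modEq (by exact_mod_cast hN) h)]

theorem fresnelKernel_mul_conj (N : ℕ) (a b : ℤ) :
    fresnelKernel N a * conj (fresnelKernel N b) = expPiDiv N (a ^ 2 - b ^ 2) / N := by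
  have hscale : (1 / Real.sqrt N : ℂ) * conj (1 / Real.sqrt N : ℂ) = 1 / N := by
    rw [map_div₀, map_one, Complex.conj_ofReal, div_mul_div_comm, one_mul, ← Complex.ofReal_mul,
      Real.mul_self_sqrt (Nat.cast_nonneg N), Complex.ofReal_natCast]
  have hphase : exp (-(π / 4) * I) * conj (exp (-(π / 4) * I)) = 1 := by
    rw [← Complex.exp_conj, ← Complex.exp_add, map_mul, Complex.conj_I, map_neg, map_div₀,
      Complex.conj_ofReal, map_ofNat]
    ring_nf
    exact Complex.exp_zero
  rw [fresnelKernel, fresnelKernel, sub_eq_add_neg, expPiDiv_add, ← conj_expPiDiv, map_mul,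
    map_mul]
  calc _ = (1 / Real.sqrt N : ℂ) * conj (1 / Real.sqrt N : ℂ) *
        (exp (-(π / 4) * I) * conj (exp (-(π / 4) * I))) *
          (expPiDiv N (a ^ 2) * conj (expPiDiv N (b ^ 2))) := by ring
    _ = _ := by rw [hscale, hphase]; ring

theorem PhiMat_mul_DeltaMat_zpow_mul_PiMat_zpow_apply {N : ℕ} (hN : 0 < N) (hNeven : Even N)
    (k l : ℤ) (m b : Fin N) :
    (PhiMat N * (DeltaMat N ^ k * PiMat N ^ l)) m b =
      fresnelKernel N (m - (b + l)) * expPiDiv N (2 * k * (b + l)) := by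
  rw [mul_apply]
  simp only [DeltaMat_zpow_mul_PiMat_zpow_apply hN, PhiMat_apply, mul_ite, mul_zero]
  refine Fin.sum_ite_intCast_modEq hN _
    (fun a => fresnelKernel N (m - a) * expPiDiv N (2 * k * a)) fun a ha => ?_
  rw [fresnelKernel_congr hNeven (ha.sub_left _), mul_assoc, mul_assoc,
    expPiDiv_congr ((ha.mul_left k).mul_left' (c := 2))]

theorem PhiMat_mul_DeltaMat_zpow_mul_PiMat_zpow_mul_conjTranspose {N : ℕ} (hN : 0 < N)
    (hNeven : Even N) (k l : ℤ) :
    PhiMat N * (DeltaMat N ^ k * PiMat N ^ l) * (PhiMat N)ᴴ =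
      exp (-(π * I * (k : ℂ) ^ 2 / N)) • (DeltaMat N ^ k * PiMat N ^ (l + k)) := by
  ext m n
  -- the terms of the two chirps that are quadratic in `b` cancel
  have hsum : (PhiMat N * (DeltaMat N ^ k * PiMat N ^ l) * (PhiMat N)ᴴ) m n =
      expPiDiv N ((m - l) ^ 2 - n ^ 2 + 2 * k * l) / N *
        ∑ b : Fin N, expPiDiv N (2 * (n + (l + k) - m) * b) := by
    rw [mul_apply, Finset.mul_sum]
    refine Finset.sum_congr rfl fun b _ => ?_
    rw [PhiMat_mul_DeltaMat_zpow_mul_PiMat_zpow_apply hN hNeven, conjTranspose_apply,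
      PhiMat_apply, star_def, mul_right_comm, fresnelKernel_mul_conj, div_mul_eq_mul_div,
      ← expPiDiv_add, div_mul_eq_mul_div, ← expPiDiv_add]
    ring_nf
  have hchirp : exp (-(π * I * (k : ℂ) ^ 2 / N)) = expPiDiv N (-k ^ 2) := by
    rw [expPiDiv]; push_cast; ring_nf
  rw [hsum, sum_expPiDiv_two_mul_mul hN, Matrix.smul_apply,
    DeltaMat_zpow_mul_PiMat_zpow_apply hN, smul_eq_mul, hchirp]
  simp only [← Int.modEq_iff_dvd]
  split_ifs with hmn
  · have hphase : (m - l) ^ 2 - n ^ 2 + 2 * k * l ≡ -k ^ 2 + 2 * k * m [ZMOD 2 * N] := by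
      have hn : (n : ℤ) ≡ m - l - k [ZMOD N] := by
        simpa only [add_sub_cancel_right, sub_sub] using (hmn.sub_right (l + k)).symm
      calc (m - l) ^ 2 - n ^ 2 + 2 * k * l
          ≡ (m - l) ^ 2 - (m - l - k) ^ 2 + 2 * k * l [ZMOD 2 * N] :=
            ((Int.sq_modEq_sq_of_modEq (by exact_mod_cast hNeven) hn).sub_left _).add_right _
        _ = -k ^ 2 + 2 * k * m := by ring
    rw [expPiDiv_congr hphase, expPiDiv_add, div_mul_cancel₀ _ (Nat.cast_ne_zero.mpr hN.ne')]
  · simp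

theorem stmt10_general (N : ℕ) (hN : 0 < N) (hNeven : Even N) (P : ℕ)
    (h : Fin P → ℂ) (k l : Fin P → ℤ)
    (H : Matrix (Fin N) (Fin N) ℂ)
    (hH : H = ∑ i : Fin P, h i • (DeltaMat N ^ k i * PiMat N ^ l i)) :
    PhiMat N * H * (PhiMat N)ᴴ =
      ∑ i : Fin P,
        (h i * Complex.exp (-(Real.pi * Complex.I * (k i : ℂ) ^ 2 / N))) •
          (DeltaMat N ^ k i * PiMat N ^ (l i + k i)) := by
  subst hH
  rw [Matrix.mul_sum, Matrix.sum_mul]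
  refine Finset.sum_congr rfl fun i _ => ?_
  rw [Matrix.mul_smul, Matrix.smul_mul,
    PhiMat_mul_DeltaMat_zpow_mul_PiMat_zpow_mul_conjTranspose hN hNeven, smul_smul]

theorem stmt10 (N : ℕ) (hN : 0 < N) (hNeven : Even N) (P : ℕ) (hP : 0 < P)
    (h : Fin P → ℂ) (k l : Fin P → ℤ)
    (H : Matrix (Fin N) (Fin N) ℂ)
    (hH : H = ∑ i : Fin P, h i • (DeltaMat N ^ k i * PiMat N ^ l i)) :
    PhiMat N * H * (PhiMat N)ᴴ =
      ∑ i : Fin P,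
        (h i * Complex.exp (-(Real.pi * Complex.I * (k i : ℂ) ^ 2 / N))) •
          (DeltaMat N ^ k i * PiMat N ^ (l i + k i)) :=
  stmt10_general N hN hNeven P h k l H hH
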